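/- For every matrix M ∈ Matrix (Fin 4) (Fin 4) ℂ, the function t ↦ exp(t L₀) · M is bounded on [0, ∞) (i.e. there is C ≥ 0 with ‖exp(t L₀) M‖ ≤ C for all t ≥ 0) if and only if Π₊ M = 0. -/

import Mathlib

open Matrix Complex

noncomputable section

/-- Pauli matrix σ₁. -/
def sigma1 : Matrix (Fin 2) (Fin 2) ℂ := !![0, 1; 1, 0]

/-- Pauli matrix σ₂. -/
def sigma2 : Matrix (Fin 2) (Fin 2) ℂ := !![0, -Complex.I; Complex.I, 0]

/-- Pauli matrix σ₃. -/
def sigma3 : Matrix (Fin 2) (Fin 2) ℂ := !![1, 0; 0, -1]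

/-- The Dirac matrices α₁, α₂, α₃ in 2×2-block form `[[0, σⱼ],[σⱼ, 0]]`. -/
def diracAlpha : Fin 3 → Matrix (Fin 4) (Fin 4) ℂ :=
  ![Matrix.reindex finSumFinEquiv finSumFinEquiv (Matrix.fromBlocks 0 sigma1 sigma1 0),
    Matrix.reindex finSumFinEquiv finSumFinEquiv (Matrix.fromBlocks 0 sigma2 sigma2 0),
    Matrix.reindex finSumFinEquiv finSumFinEquiv (Matrix.fromBlocks 0 sigma3 sigma3 0)]

/-- The Dirac matrix β = `[[I₂, 0],[0, −I₂]]`. -/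
def diracBeta : Matrix (Fin 4) (Fin 4) ℂ :=
  Matrix.reindex finSumFinEquiv finSumFinEquiv
    (Matrix.fromBlocks (1 : Matrix (Fin 2) (Fin 2) ℂ) 0 0 (-1 : Matrix (Fin 2) (Fin 2) ℂ))

/-- α·x = x₁α₁ + x₂α₂ + x₃α₃. -/
def alphaDot (x : Fin 3 → ℝ) : Matrix (Fin 4) (Fin 4) ℂ :=
  (x 0 : ℂ) • diracAlpha 0 + (x 1 : ℂ) • diracAlpha 1 + (x 2 : ℂ) • diracAlpha 2

/-- Euclidean inner product on ℝ³. -/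
def inner3 (X Y : Fin 3 → ℝ) : ℝ := X 0 * Y 0 + X 1 * Y 1 + X 2 * Y 2

/-- Euclidean norm on ℝ³. -/
def norm3 (X : Fin 3 → ℝ) : ℝ := Real.sqrt (inner3 X X)

/-- Cross product on ℝ³. -/
def cross3 (X Y : Fin 3 → ℝ) : Fin 3 → ℝ :=
  ![X 1 * Y 2 - X 2 * Y 1, X 2 * Y 0 - X 0 * Y 2, X 0 * Y 1 - X 1 * Y 0]

/-- γ₅ := −i α₁α₂α₃. -/
def gamma5 : Matrix (Fin 4) (Fin 4) ℂ :=
  (-Complex.I) • (diracAlpha 0 * diracAlpha 1 * diracAlpha 2)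

/-- S·X := −γ₅ (α·X). -/
def sDot (X : Fin 3 → ℝ) : Matrix (Fin 4) (Fin 4) ℂ := -(gamma5 * alphaDot X)

/-- P₊ := (I₄ − iβ(α·ν))/2. -/
def Pplus (ν : Fin 3 → ℝ) : Matrix (Fin 4) (Fin 4) ℂ :=
  ((1 : ℂ) / 2) • (1 - Complex.I • (diracBeta * alphaDot ν))

/-- P₋ := (I₄ + iβ(α·ν))/2. -/
def Pminus (ν : Fin 3 → ℝ) : Matrix (Fin 4) (Fin 4) ℂ :=
  ((1 : ℂ) / 2) • (1 + Complex.I • (diracBeta * alphaDot ν))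

/-- λ := √(|ν × ξ|² + 1). -/
def lam (ν ξ : Fin 3 → ℝ) : ℝ :=
  Real.sqrt (inner3 (cross3 ν ξ) (cross3 ν ξ) + 1)

/-- Π₊ := (1/2)(I₄ + λ⁻¹(S·τ − iβ(α·ν))), τ = ν × ξ. -/
def Piplus (ν ξ : Fin 3 → ℝ) : Matrix (Fin 4) (Fin 4) ℂ :=
  ((1 : ℂ) / 2) •
    (1 + ((lam ν ξ : ℂ))⁻¹ • (sDot (cross3 ν ξ) - Complex.I • (diracBeta * alphaDot ν)))

/-- Π₋ := (1/2)(I₄ − λ⁻¹(S·τ − iβ(α·ν))), τ = ν × ξ. -/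
def Piminus (ν ξ : Fin 3 → ℝ) : Matrix (Fin 4) (Fin 4) ℂ :=
  ((1 : ℂ) / 2) •
    (1 - ((lam ν ξ : ℂ))⁻¹ • (sDot (cross3 ν ξ) - Complex.I • (diracBeta * alphaDot ν)))

/-- ρ₊ := (i⟨ν,ξ⟩ + λ)/s. -/
def rhoP (ν ξ : Fin 3 → ℝ) (s : ℝ) : ℂ :=
  (Complex.I * (inner3 ν ξ : ℂ) + (lam ν ξ : ℂ)) / (s : ℂ)

/-- ρ₋ := (i⟨ν,ξ⟩ − λ)/s. -/
def rhoM (ν ξ : Fin 3 → ℝ) (s : ℝ) : ℂ :=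
  (Complex.I * (inner3 ν ξ : ℂ) - (lam ν ξ : ℂ)) / (s : ℂ)

/-- L₀ := s⁻¹ (iα·ν)(α·ξ + β). -/
def L0 (ν ξ : Fin 3 → ℝ) (s : ℝ) : Matrix (Fin 4) (Fin 4) ℂ :=
  ((s : ℂ))⁻¹ • ((Complex.I • alphaDot ν) * (alphaDot ξ + diracBeta))

/-- k₊ := (1 + λ⁻¹)/2. -/
def kPlus (ν ξ : Fin 3 → ℝ) : ℝ := (1 + (lam ν ξ)⁻¹) / 2

/-- k₋ := (1 − λ⁻¹)/2. -/
def kMinus (ν ξ : Fin 3 → ℝ) : ℝ := (1 - (lam ν ξ)⁻¹) / 2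

/-- Θ := (2λ)⁻¹ S·τ, τ = ν × ξ. -/
def theta (ν ξ : Fin 3 → ℝ) : Matrix (Fin 4) (Fin 4) ℂ :=
  ((2 * lam ν ξ : ℝ) : ℂ)⁻¹ • sDot (cross3 ν ξ)

/-- The fundamental solution φ_{m,z,w} of the free Dirac operator. -/
def phiFS (m : ℝ) (z w : ℂ) (x : Fin 3 → ℝ) : Matrix (Fin 4) (Fin 4) ℂ :=
  (Complex.exp (Complex.I * w * (norm3 x : ℂ)) / (4 * (Real.pi : ℂ) * (norm3 x : ℂ))) •
    (z • (1 : Matrix (Fin 4) (Fin 4) ℂ) + (m : ℂ) • diracBeta +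
      ((1 - Complex.I * w * (norm3 x : ℂ)) * Complex.I / ((norm3 x : ℂ) ^ 2)) • alphaDot x)

attribute [local instance] Matrix.normedAddCommGroup Matrix.normedSpace

/-!
With `K := S·τ − iβ(α·ν)` one has `L₀ = s⁻¹(i⟨ν,ξ⟩ + K)`. The Clifford relations of `α, β, γ₅`
together with `τ ⊥ ν` and `|ν| = 1` give `K² = |τ|² + 1 = λ²`, so `Π₊ = (1 + λ⁻¹K)/2` is an
idempotent with complement `Π₋ = 1 − Π₊`, and `t L₀ = t ρ₊ Π₊ + t ρ₋ Π₋`. Hence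
`exp(t L₀) M = e^{t ρ₊} Π₊ M + e^{t ρ₋} Π₋ M` with `Re ρ± = ±λ/s`: the second term stays bounded
and the first one grows exponentially unless `Π₊ M = 0`.
-/

open Filter

section Idempotent

variable {A : Type*} [NormedRing A] [NormedAlgebra ℂ A] {P : A}

def IsIdempotentElem.prodRingHom (hP : IsIdempotentElem P) : ℂ × ℂ →+* A where
  toFun x := x.1 • P + x.2 • (1 - P)
  map_one' := by simp
  map_mul' x y := by
    have hP₁ : P * (1 - P) = 0 := by rw [mul_sub, mul_one, hP.eq, sub_self]
    have hP₂ : (1 - P) * P = 0 := by rw [sub_mul, one_mul, hP.eq, sub_self]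
    simp only [Prod.fst_mul, Prod.snd_mul, add_mul, mul_add, smul_mul_smul_comm, hP.eq,
      hP.one_sub.eq, hP₁, hP₂, smul_zero, add_zero, zero_add]
  map_zero' := by simp
  map_add' x y := by simp only [Prod.fst_add, Prod.snd_add, add_smul]; abel

theorem IsIdempotentElem.exp_smul_add_smul_one_sub (hP : IsIdempotentElem P) (a b : ℂ) :
    NormedSpace.exp (a • P + b • (1 - P)) = Complex.exp a • P + Complex.exp b • (1 - P) := by
  have hcont : Continuous hP.prodRingHom :=
    show Continuous fun x : ℂ × ℂ => x.1 • P + x.2 • (1 - P) by fun_prop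
  have := NormedSpace.map_exp_of_mem_ball (𝕂 := ℂ) hP.prodRingHom hcont (a, b)
    (by simp [NormedSpace.expSeries_radius_eq_top])
  simpa [IsIdempotentElem.prodRingHom, Complex.exp_eq_exp_ℂ] using this.symm

end Idempotent

theorem isIdempotentElem_half_smul_one_add {𝕜 A : Type*} [Field 𝕜] [NeZero (2 : 𝕜)] [Ring A]
    [Algebra 𝕜 A] {J : A} (hJ : J * J = 1) : IsIdempotentElem ((1 / 2 : 𝕜) • (1 + J)) := by
  simp only [IsIdempotentElem, smul_mul_smul_comm, add_mul, mul_add, hJ, one_mul, mul_one]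
  rw [show (1 : A) + J + (J + 1) = (2 : 𝕜) • (1 + J) by module, smul_smul]
  congr 1
  field_simp

theorem Complex.norm_exp_ofReal_mul (t : ℝ) (z : ℂ) :
    ‖Complex.exp (t * z)‖ = Real.exp (t * z.re) := by
  rw [Complex.norm_exp, Complex.re_ofReal_mul]

theorem exists_bound_exp_smul_add_exp_smul_iff {E : Type*} [NormedAddCommGroup E]
    [NormedSpace ℂ E] {ρ σ : ℂ} (hρ : 0 < ρ.re) (hσ : σ.re ≤ 0) (x y : E) :
    (∃ C : ℝ, 0 ≤ C ∧ ∀ t : ℝ, 0 ≤ t →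
        ‖Complex.exp (t * ρ) • x + Complex.exp (t * σ) • y‖ ≤ C) ↔ x = 0 := by
  have hdecay (t : ℝ) (ht : 0 ≤ t) : ‖Complex.exp (t * σ) • y‖ ≤ ‖y‖ := by
    rw [norm_smul, Complex.norm_exp_ofReal_mul]
    exact mul_le_of_le_one_left (norm_nonneg y)
      (Real.exp_le_one_iff.2 (mul_nonpos_of_nonneg_of_nonpos ht hσ))
  constructor
  · rintro ⟨C, -, hC⟩
    by_contra hx
    have hgrow : Tendsto (fun t : ℝ => Real.exp (t * ρ.re) * ‖x‖) atTop atTop :=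
      (Real.tendsto_exp_atTop.comp (tendsto_id.atTop_mul_const hρ)).atTop_mul_const
        (norm_pos_iff.2 hx)
    obtain ⟨t, ht, hCt⟩ :=
      ((eventually_ge_atTop 0).and (hgrow.eventually_gt_atTop (C + ‖y‖))).exists
    have hbound : Real.exp (t * ρ.re) * ‖x‖ ≤ C + ‖y‖ := calc
      Real.exp (t * ρ.re) * ‖x‖ = ‖Complex.exp (t * ρ) • x‖ := by
        rw [norm_smul, Complex.norm_exp_ofReal_mul]
      _ ≤ ‖Complex.exp (t * ρ) • x + Complex.exp (t * σ) • y‖ + ‖Complex.exp (t * σ) • y‖ :=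
        norm_le_add_norm_add _ _
      _ ≤ C + ‖y‖ := add_le_add (hC t ht) (hdecay t ht)
    linarith
  · rintro rfl
    exact ⟨‖y‖, norm_nonneg y, fun t ht => by simpa using hdecay t ht⟩

lemma diracAlpha_zero : diracAlpha 0 = !![0, 0, 0, 1; 0, 0, 1, 0; 0, 1, 0, 0; 1, 0, 0, 0] := by
  ext i j
  fin_cases i <;> fin_cases j <;> rfl

lemma diracAlpha_one :
    diracAlpha 1 = !![0, 0, 0, -I; 0, 0, I, 0; 0, -I, 0, 0; I, 0, 0, 0] := by
  ext i j
  fin_cases i <;> fin_cases j <;> rfl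

lemma diracAlpha_two : diracAlpha 2 = !![0, 0, 1, 0; 0, 0, 0, -1; 1, 0, 0, 0; 0, -1, 0, 0] := by
  ext i j
  fin_cases i <;> fin_cases j <;> rfl

lemma diracBeta_eq : diracBeta = !![1, 0, 0, 0; 0, 1, 0, 0; 0, 0, -1, 0; 0, 0, 0, -1] := by
  ext i j
  fin_cases i <;> fin_cases j <;> first | rfl | exact neg_zero

lemma gamma5_eq : gamma5 = !![0, 0, 1, 0; 0, 0, 0, 1; 1, 0, 0, 0; 0, 1, 0, 0] := by
  rw [gamma5, diracAlpha_zero, diracAlpha_one, diracAlpha_two]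
  ext i j
  fin_cases i <;> fin_cases j <;> simp

lemma alphaDot_eq (x : Fin 3 → ℝ) : alphaDot x =
    !![0, 0, (x 2 : ℂ), x 0 - I * x 1;
       0, 0, x 0 + I * x 1, -(x 2 : ℂ);
       (x 2 : ℂ), x 0 - I * x 1, 0, 0;
       x 0 + I * x 1, -(x 2 : ℂ), 0, 0] := by
  rw [alphaDot, diracAlpha_zero, diracAlpha_one, diracAlpha_two]
  ext i j
  fin_cases i <;> fin_cases j <;> simp <;> ring

lemma alphaDot_mul_alphaDot (a b : Fin 3 → ℝ) :
    alphaDot a * alphaDot b = (inner3 a b : ℂ) • 1 - I • sDot (cross3 a b) := by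
  rw [sDot, gamma5_eq, alphaDot_eq, alphaDot_eq, alphaDot_eq]
  ext i j
  fin_cases i <;> fin_cases j <;> apply Complex.ext <;>
    simp [Matrix.mul_apply, Fin.sum_univ_four, inner3, cross3] <;> ring

lemma alphaDot_mul_add_mul_alphaDot (a b : Fin 3 → ℝ) :
    alphaDot a * alphaDot b + alphaDot b * alphaDot a = (2 * inner3 a b : ℂ) • 1 := by
  rw [alphaDot_eq, alphaDot_eq]
  ext i j
  fin_cases i <;> fin_cases j <;> apply Complex.ext <;>
    simp [inner3] <;> ring

lemma diracBeta_mul_self : diracBeta * diracBeta = 1 := by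
  rw [diracBeta_eq]
  ext i j
  fin_cases i <;> fin_cases j <;> simp [Matrix.mul_apply, Fin.sum_univ_four]

lemma gamma5_mul_self : gamma5 * gamma5 = 1 := by
  rw [gamma5_eq]
  ext i j
  fin_cases i <;> fin_cases j <;> simp [Matrix.mul_apply, Fin.sum_univ_four]

lemma diracBeta_mul_alphaDot (a : Fin 3 → ℝ) :
    diracBeta * alphaDot a = -(alphaDot a * diracBeta) := by
  rw [diracBeta_eq, alphaDot_eq]
  ext i j
  fin_cases i <;> fin_cases j <;> simp [Matrix.mul_apply, Fin.sum_univ_four]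

lemma gamma5_commute_alphaDot (a : Fin 3 → ℝ) : Commute gamma5 (alphaDot a) := by
  change _ * _ = _ * _
  rw [gamma5_eq, alphaDot_eq]
  ext i j
  fin_cases i <;> fin_cases j <;> simp [Matrix.mul_apply, Fin.sum_univ_four]

lemma gamma5_mul_diracBeta : gamma5 * diracBeta = -(diracBeta * gamma5) := by
  rw [gamma5_eq, diracBeta_eq]
  ext i j
  fin_cases i <;> fin_cases j <;> simp [Matrix.mul_apply, Fin.sum_univ_four]

lemma alphaDot_mul_self (a : Fin 3 → ℝ) : alphaDot a * alphaDot a = (inner3 a a : ℂ) • 1 := by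
  have h := alphaDot_mul_add_mul_alphaDot a a
  rw [← two_smul ℂ, mul_smul] at h
  exact smul_right_injective _ two_ne_zero h

lemma sDot_mul_self (X : Fin 3 → ℝ) : sDot X * sDot X = (inner3 X X : ℂ) • 1 := by
  rw [sDot, neg_mul_neg, (gamma5_commute_alphaDot X).symm.mul_mul_mul_comm, gamma5_mul_self,
    one_mul, alphaDot_mul_self]

lemma diracBeta_alphaDot_mul_self (a : Fin 3 → ℝ) :
    diracBeta * alphaDot a * (diracBeta * alphaDot a) = -((inner3 a a : ℂ) • 1) := by
  rw [mul_assoc, ← mul_assoc (alphaDot a), ← neg_neg (alphaDot a * diracBeta),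
    ← diracBeta_mul_alphaDot]
  simp only [neg_mul, mul_neg, ← mul_assoc, diracBeta_mul_self, one_mul, alphaDot_mul_self]

lemma sDot_anticommute_diracBeta_alphaDot {X a : Fin 3 → ℝ} (hXa : inner3 X a = 0) :
    sDot X * (diracBeta * alphaDot a) + diracBeta * alphaDot a * sDot X = 0 := by
  have hXβ (Z : Matrix (Fin 4) (Fin 4) ℂ) :
      alphaDot X * (diracBeta * Z) = -(diracBeta * (alphaDot X * Z)) := by
    rw [← mul_assoc, ← neg_neg (alphaDot X * diracBeta), ← diracBeta_mul_alphaDot, neg_mul,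
      mul_assoc]
  have hγβ (Z : Matrix (Fin 4) (Fin 4) ℂ) :
      gamma5 * (diracBeta * Z) = -(diracBeta * (gamma5 * Z)) := by
    rw [← mul_assoc, gamma5_mul_diracBeta, neg_mul, mul_assoc]
  have haγ (Z : Matrix (Fin 4) (Fin 4) ℂ) :
      alphaDot a * (gamma5 * Z) = gamma5 * (alphaDot a * Z) := by
    rw [← mul_assoc, ← (gamma5_commute_alphaDot a).eq, mul_assoc]
  calc sDot X * (diracBeta * alphaDot a) + diracBeta * alphaDot a * sDot X
      = -(diracBeta * gamma5 * (alphaDot X * alphaDot a + alphaDot a * alphaDot X)) := by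
        simp only [sDot, mul_add, neg_mul, mul_neg, mul_assoc, hXβ, hγβ, haγ, neg_neg, neg_add]
    _ = 0 := by rw [alphaDot_mul_add_mul_alphaDot, hXa]; simp

lemma inner3_self_nonneg (X : Fin 3 → ℝ) : 0 ≤ inner3 X X :=
  add_nonneg (add_nonneg (mul_self_nonneg _) (mul_self_nonneg _)) (mul_self_nonneg _)

lemma sq_norm3 (X : Fin 3 → ℝ) : norm3 X ^ 2 = inner3 X X :=
  Real.sq_sqrt (inner3_self_nonneg X)

lemma inner3_cross3_self_left (ν ξ : Fin 3 → ℝ) : inner3 (cross3 ν ξ) ν = 0 := by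
  simp only [inner3, cross3, Matrix.cons_val]
  ring

lemma lam_sq (ν ξ : Fin 3 → ℝ) : lam ν ξ ^ 2 = inner3 (cross3 ν ξ) (cross3 ν ξ) + 1 :=
  Real.sq_sqrt (by linarith [inner3_self_nonneg (cross3 ν ξ)])

lemma lam_pos (ν ξ : Fin 3 → ℝ) : 0 < lam ν ξ :=
  Real.sqrt_pos.2 (by linarith [inner3_self_nonneg (cross3 ν ξ)])

def diracK (ν ξ : Fin 3 → ℝ) : Matrix (Fin 4) (Fin 4) ℂ :=
  sDot (cross3 ν ξ) - I • (diracBeta * alphaDot ν)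

lemma diracK_mul_self {ν : Fin 3 → ℝ} (hν : inner3 ν ν = 1) (ξ : Fin 3 → ℝ) :
    diracK ν ξ * diracK ν ξ = ((lam ν ξ : ℂ) ^ 2) • 1 := by
  rw [diracK]
  set S := sDot (cross3 ν ξ)
  set B := diracBeta * alphaDot ν
  calc (S - I • B) * (S - I • B) = S * S - I • (S * B + B * S) + (I * I) • (B * B) := by
        simp only [sub_mul, mul_sub, smul_mul_assoc, mul_smul_comm]
        module
    _ = ((inner3 (cross3 ν ξ) (cross3 ν ξ) + 1 : ℝ) : ℂ) • 1 := by
        rw [sDot_mul_self, sDot_anticommute_diracBeta_alphaDot (inner3_cross3_self_left ν ξ),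
          diracBeta_alphaDot_mul_self, hν, I_mul_I]
        module
    _ = ((lam ν ξ : ℂ) ^ 2) • 1 := by rw [← lam_sq]; push_cast; rfl

lemma L0_eq (ν ξ : Fin 3 → ℝ) (s : ℝ) :
    L0 ν ξ s = (s : ℂ)⁻¹ • ((I * inner3 ν ξ) • 1 + diracK ν ξ) := by
  rw [L0, diracK, smul_mul_assoc, mul_add, alphaDot_mul_alphaDot,
    ← neg_neg (alphaDot ν * diracBeta), ← diracBeta_mul_alphaDot]
  congr 1
  match_scalars <;> simp

lemma Piplus_eq (ν ξ : Fin 3 → ℝ) :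
    Piplus ν ξ = (1 / 2 : ℂ) • (1 + (lam ν ξ : ℂ)⁻¹ • diracK ν ξ) := rfl

lemma isIdempotentElem_Piplus {ν : Fin 3 → ℝ} (hν : inner3 ν ν = 1) (ξ : Fin 3 → ℝ) :
    IsIdempotentElem (Piplus ν ξ) := by
  have hlam : (lam ν ξ : ℂ) ≠ 0 := by exact_mod_cast (lam_pos ν ξ).ne'
  rw [Piplus_eq]
  apply isIdempotentElem_half_smul_one_add
  rw [smul_mul_smul_comm, diracK_mul_self hν, smul_smul]
  field_simp
  simp

lemma smul_L0_eq {s : ℝ} (hs : s ≠ 0) (ν ξ : Fin 3 → ℝ) (t : ℝ) :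
    (t : ℂ) • L0 ν ξ s =
      (t * rhoP ν ξ s) • Piplus ν ξ + (t * rhoM ν ξ s) • (1 - Piplus ν ξ) := by
  have hlam : (lam ν ξ : ℂ) ≠ 0 := by exact_mod_cast (lam_pos ν ξ).ne'
  have hs' : (s : ℂ) ≠ 0 := by exact_mod_cast hs
  rw [L0_eq, Piplus_eq, rhoP, rhoM]
  match_scalars <;> field_simp <;> ring

lemma exp_smul_L0 {ν : Fin 3 → ℝ} (hν : inner3 ν ν = 1) (ξ : Fin 3 → ℝ) {s : ℝ} (hs : s ≠ 0)
    (t : ℝ) :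
    NormedSpace.exp ((t : ℂ) • L0 ν ξ s) =
      Complex.exp (t * rhoP ν ξ s) • Piplus ν ξ +
        Complex.exp (t * rhoM ν ξ s) • (1 - Piplus ν ξ) := by
  -- `NormedSpace.exp` depends only on the topology, so any algebra norm on matrices will do.
  let : NormedRing (Matrix (Fin 4) (Fin 4) ℂ) := Matrix.linftyOpNormedRing
  let : NormedAlgebra ℂ (Matrix (Fin 4) (Fin 4) ℂ) := Matrix.linftyOpNormedAlgebra
  rw [smul_L0_eq hs]
  exact (isIdempotentElem_Piplus hν ξ).exp_smul_add_smul_one_sub _ _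

lemma rhoP_re (ν ξ : Fin 3 → ℝ) (s : ℝ) : (rhoP ν ξ s).re = lam ν ξ / s := by
  simp [rhoP, Complex.div_ofReal_re]

lemma rhoM_re (ν ξ : Fin 3 → ℝ) (s : ℝ) : (rhoM ν ξ s).re = -(lam ν ξ / s) := by
  simp [rhoM, Complex.div_ofReal_re, neg_div]

theorem stmt15 (ν ξ : Fin 3 → ℝ) (s : ℝ) (hν : norm3 ν = 1) (hs : 0 < s)
    (M : Matrix (Fin 4) (Fin 4) ℂ) :
    (∃ C : ℝ, 0 ≤ C ∧ ∀ t : ℝ, 0 ≤ t →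
        ‖NormedSpace.exp (((t : ℂ)) • L0 ν ξ s) * M‖ ≤ C) ↔
      Piplus ν ξ * M = 0 := by
  have hν' : inner3 ν ν = 1 := by rw [← sq_norm3, hν, one_pow]
  have hexp (t : ℝ) : NormedSpace.exp ((t : ℂ) • L0 ν ξ s) * M =
      Complex.exp (t * rhoP ν ξ s) • (Piplus ν ξ * M) +
        Complex.exp (t * rhoM ν ξ s) • ((1 - Piplus ν ξ) * M) := by
    rw [exp_smul_L0 hν' ξ hs.ne', add_mul, smul_mul_assoc, smul_mul_assoc]
  have hρ : 0 < (rhoP ν ξ s).re := by rw [rhoP_re]; exact div_pos (lam_pos ν ξ) hs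
  have hσ : (rhoM ν ξ s).re ≤ 0 := by
    rw [rhoM_re]; exact neg_nonpos.2 (div_pos (lam_pos ν ξ) hs).le
  simp_rw [hexp]
  exact exists_bound_exp_smul_add_exp_smul_iff hρ hσ _ _

end
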